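/- arXiv:1204.1366 — 2 statements merged into one kernel-verified Lean document; each statement's English description precedes it below -/
import Mathlib

section
/- Let $e_1,\dots,e_n$ be random unit vectors in $\mathbb{R}^3$ with $\mathbb{E}[\langle e_i,e_j\rangle] = -1/(n-1)$ for all $i \ne j$, let $v_k = \sum_{i=1}^k e_i$ and $c = \frac1n \sum_{k=1}^n v_k$. Then $\mathbb{E}[\|c\|^2] = \frac{n+1}{12}$. -/
/-!
Exchanging the two sums, the centre of mass is `n⁻¹ • ∑ i, (n + 1 - i) • e i`. Expanding the
squared norm, its expectation is a quadratic form in the weights `w i = n + 1 - i` whose matrix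
has `1` on the diagonal and `r = -1/(n-1)` off it, i.e. `r (∑ w)² + (1 - r) ∑ w²`; the sums of
`w` and `w²` are Gauss's `n(n+1)/2` and `n(n+1)(2n+1)/6`.
-/

open MeasureTheory Finset
open scoped InnerProductSpace

theorem sum_Icc_sum_Icc_eq_sum_smul {R M : Type*} [CommRing R] [AddCommGroup M] [Module R M]
    (f : ℕ → M) (n : ℕ) :
    ∑ k ∈ Icc 1 n, ∑ i ∈ Icc 1 k, f i = ∑ i ∈ Icc 1 n, ((n : R) + 1 - i) • f i := by
  induction n with
  | zero => simp
  | succ n ih =>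
    rw [sum_Icc_succ_top (by omega), ih, sum_Icc_succ_top (by omega),
      sum_Icc_succ_top (by omega), ← add_assoc, ← sum_add_distrib]
    push_cast
    rw [add_sub_cancel_left, one_smul]
    congr 1
    refine sum_congr rfl fun i _ => ?_
    module

theorem sum_Icc_comp_natCast_reflect {M : Type*} [AddCommMonoid M] (g : ℝ → M) (n : ℕ) :
    ∑ i ∈ Icc 1 n, g ((n : ℝ) + 1 - i) = ∑ i ∈ Icc 1 n, g i := by
  refine sum_nbij' (fun i => n + 1 - i) (fun i => n + 1 - i) ?_ ?_ ?_ ?_ fun i hi => ?_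
  any_goals intro i hi; simp only [mem_Icc] at hi ⊢; omega
  rw [Nat.cast_sub (by simp only [mem_Icc] at hi; omega)]
  push_cast
  ring_nf

theorem sum_Icc_natCast (n : ℕ) : ∑ i ∈ Icc 1 n, (i : ℝ) = n * (n + 1) / 2 := by
  induction n with
  | zero => simp
  | succ n ih =>
    rw [sum_Icc_succ_top (by omega), ih]
    push_cast
    ring

theorem sum_Icc_natCast_sq (n : ℕ) :
    ∑ i ∈ Icc 1 n, (i : ℝ) ^ 2 = n * (n + 1) * (2 * n + 1) / 6 := by
  induction n with
  | zero => simp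
  | succ n ih =>
    rw [sum_Icc_succ_top (by omega), ih]
    push_cast
    ring

theorem sum_sum_mul_mul_eq_of_diag_offDiag {ι : Type*} [DecidableEq ι] (s : Finset ι)
    (a : ι → ℝ) (G : ι → ι → ℝ) {d r : ℝ} (hdiag : ∀ i ∈ s, G i i = d)
    (hoff : ∀ i ∈ s, ∀ j ∈ s, i ≠ j → G i j = r) :
    ∑ i ∈ s, ∑ j ∈ s, a i * a j * G i j = r * (∑ i ∈ s, a i) ^ 2 + (d - r) * ∑ i ∈ s, a i ^ 2 := by
  calc ∑ i ∈ s, ∑ j ∈ s, a i * a j * G i j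
      = ∑ i ∈ s, ∑ j ∈ s, (r * (a i * a j) + if i = j then (d - r) * a i ^ 2 else 0) := by
        refine sum_congr rfl fun i hi => sum_congr rfl fun j hj => ?_
        split_ifs with h
        · subst h; rw [hdiag i hi]; ring
        · rw [hoff i hi j hj h]; ring
    _ = ∑ i ∈ s, (r * (a i * ∑ j ∈ s, a j) + (d - r) * a i ^ 2) :=
        sum_congr rfl fun i hi => by rw [sum_add_distrib, sum_ite_eq, if_pos hi, ← mul_sum, ← mul_sum]
    _ = r * (∑ i ∈ s, a i) ^ 2 + (d - r) * ∑ i ∈ s, a i ^ 2 := by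
        rw [sum_add_distrib, ← mul_sum, ← mul_sum, ← sum_mul, sq]

theorem norm_sum_smul_sq {ι E : Type*} [NormedAddCommGroup E] [InnerProductSpace ℝ E]
    (s : Finset ι) (a : ι → ℝ) (x : ι → E) :
    ‖∑ i ∈ s, a i • x i‖ ^ 2 = ∑ i ∈ s, ∑ j ∈ s, a i * a j * ⟪x i, x j⟫_ℝ := by
  simp only [← real_inner_self_eq_norm_sq, sum_inner, inner_sum, real_inner_smul_left,
    real_inner_smul_right, mul_assoc]
  exact sum_congr rfl fun i _ => sum_congr rfl fun j _ => by rw [real_inner_comm]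

theorem integral_norm_sum_smul_sq {Ω ι E : Type*} [MeasurableSpace Ω] {μ : Measure Ω}
    [NormedAddCommGroup E] [InnerProductSpace ℝ E] (s : Finset ι) (a : ι → ℝ) {X : ι → Ω → E}
    (hX : ∀ i ∈ s, ∀ j ∈ s, Integrable (fun ω => ⟪X i ω, X j ω⟫_ℝ) μ) :
    ∫ ω, ‖∑ i ∈ s, a i • X i ω‖ ^ 2 ∂μ
      = ∑ i ∈ s, ∑ j ∈ s, a i * a j * ∫ ω, ⟪X i ω, X j ω⟫_ℝ ∂μ := by
  simp_rw [norm_sum_smul_sq]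
  rw [integral_finsetSum _ fun i hi => integrable_finsetSum _ fun j hj => (hX i hi j hj).const_mul _]
  refine sum_congr rfl fun i hi => ?_
  rw [integral_finsetSum _ fun j hj => (hX i hi j hj).const_mul _]
  exact sum_congr rfl fun j _ => integral_const_mul _ _

/-- For a random ideal ring of length `n ≥ 2`, based at the origin with vertices
`v k = e 1 + ⋯ + e k` and center of mass `c`, the expectation of `‖c‖²` is `(n+1)/12`. -/
theorem expected_center_of_mass (n : ℕ) (hn : 2 ≤ n)
    {Ω : Type*} [MeasurableSpace Ω] (μ : Measure Ω) [IsProbabilityMeasure μ]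
    (e : ℕ → Ω → EuclideanSpace ℝ (Fin 3))
    (hunit : ∀ i ∈ Finset.Icc 1 n, ∀ ω, ‖e i ω‖ = 1)
    (hint : ∀ i ∈ Finset.Icc 1 n, ∀ i' ∈ Finset.Icc 1 n,
      Integrable (fun ω => ⟪e i ω, e i' ω⟫_ℝ) μ)
    (hexp : ∀ i ∈ Finset.Icc 1 n, ∀ i' ∈ Finset.Icc 1 n, i ≠ i' →
      ∫ ω, ⟪e i ω, e i' ω⟫_ℝ ∂μ = -1 / ((n : ℝ) - 1)) :
    ∫ ω, ‖(n : ℝ)⁻¹ • ∑ k ∈ Finset.Icc 1 n, ∑ i ∈ Finset.Icc 1 k, e i ω‖ ^ 2 ∂μ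
      = ((n : ℝ) + 1) / 12 := by
  have hdiag : ∀ i ∈ Icc 1 n, ∫ ω, ⟪e i ω, e i ω⟫_ℝ ∂μ = 1 := fun i hi => by
    simp [hunit i hi]
  have hS1 : ∑ i ∈ Icc 1 n, ((n : ℝ) + 1 - i) = n * (n + 1) / 2 :=
    (sum_Icc_comp_natCast_reflect (fun x => x) n).trans (sum_Icc_natCast n)
  have hS2 : ∑ i ∈ Icc 1 n, ((n : ℝ) + 1 - i) ^ 2 = (n : ℝ) * (n + 1) * (2 * n + 1) / 6 :=
    (sum_Icc_comp_natCast_reflect (fun x => x ^ 2) n).trans (sum_Icc_natCast_sq n)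
  have hn' : (2 : ℝ) ≤ n := by exact_mod_cast hn
  calc ∫ ω, ‖(n : ℝ)⁻¹ • ∑ k ∈ Icc 1 n, ∑ i ∈ Icc 1 k, e i ω‖ ^ 2 ∂μ
      = ∫ ω, (n : ℝ)⁻¹ ^ 2 * ‖∑ i ∈ Icc 1 n, ((n : ℝ) + 1 - i) • e i ω‖ ^ 2 ∂μ := by
        simp_rw [sum_Icc_sum_Icc_eq_sum_smul (R := ℝ), norm_smul, mul_pow, norm_inv,
          Real.norm_natCast]
    _ = (n : ℝ)⁻¹ ^ 2 * ∑ i ∈ Icc 1 n, ∑ j ∈ Icc 1 n,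
          ((n : ℝ) + 1 - i) * ((n : ℝ) + 1 - j) * ∫ ω, ⟪e i ω, e j ω⟫_ℝ ∂μ := by
        rw [integral_const_mul, integral_norm_sum_smul_sq _ _ hint]
    _ = (n : ℝ)⁻¹ ^ 2 * (-1 / ((n : ℝ) - 1) * (n * (n + 1) / 2) ^ 2
          + (1 - -1 / ((n : ℝ) - 1)) * (n * (n + 1) * (2 * n + 1) / 6)) := by
        rw [sum_sum_mul_mul_eq_of_diag_offDiag _ _ _ hdiag hexp, hS1, hS2]
    _ = ((n : ℝ) + 1) / 12 := by
        have : (n : ℝ) - 1 ≠ 0 := by linarith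
        field_simp
        ring
end

section
/- Let $e_1,\dots,e_n$ be random unit vectors in $\mathbb{R}^3$ with $\mathbb{E}[\langle e_i,e_j\rangle] = -1/(n-1)$ for all $i\ne j$, $n\ge 2$. Fix $m$ and $k$ with $m+k\le n$, let $v_j' = \sum_{i=m+1}^{m+j} e_i$ for $1 \le j \le k$ and $c' = \frac1k\sum_{j=1}^k v_j'$. Then $\mathbb{E}\left[\frac1k\sum_{j=1}^k \|v_j' - c'\|^2\right] = \frac{(k^2-1)(2n-k)}{12k(n-1)}$. -/
open MeasureTheory Finset
open scoped InnerProductSpace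

/-! The squared radius of gyration of points `f j`, `j ∈ J`, is a quadratic form in their Gram
matrix, `∑ ⟪f j, f j⟫ - (#J)⁻¹ ∑ ⟪f j, f j'⟫`, so its expectation only involves the expected
inner products. For partial sums `f j = ∑ i ∈ I j, e i` of unit vectors with constant off-diagonal
correlation `c` these are `c #(I j) #(I j') + (1 - c) #(I j ∩ I j')`; for the nested intervals of a
subsegment the cardinalities are `j` and `min j j'`, leaving power sums over `1, …, k`. -/

theorem Finset.sum_sum_ite_eq_card_inter {R ι : Type*} [CommRing R] [DecidableEq ι]
    (s t : Finset ι) (a b : R) :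
    ∑ i ∈ s, ∑ i' ∈ t, (if i = i' then a else b) = b * #s * #t + (a - b) * #(s ∩ t) := by
  have hsplit : ∀ i i' : ι, (if i = i' then a else b) = b + if i = i' then a - b else 0 := by
    intro i i'; split_ifs <;> ring
  simp_rw [hsplit, sum_add_distrib, sum_ite_eq, sum_ite_mem, sum_const, nsmul_eq_mul]
  ring

theorem Finset.sum_Icc_one_natCast (k : ℕ) :
    ∑ j ∈ Icc 1 k, (j : ℝ) = k * (k + 1) / 2 := by
  induction k with
  | zero => simp
  | succ k ih => rw [sum_Icc_succ_top (by omega), ih]; push_cast; ring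

theorem Finset.sum_Icc_one_natCast_sq (k : ℕ) :
    ∑ j ∈ Icc 1 k, (j : ℝ) ^ 2 = k * (k + 1) * (2 * k + 1) / 6 := by
  induction k with
  | zero => simp
  | succ k ih => rw [sum_Icc_succ_top (by omega), ih]; push_cast; ring

theorem Finset.sum_Icc_one_sum_Icc_one_min (k : ℕ) :
    ∑ j ∈ Icc 1 k, ∑ j' ∈ Icc 1 k, ((min j j' : ℕ) : ℝ) = k * (k + 1) * (2 * k + 1) / 6 := by
  induction k with
  | zero => simp
  | succ k ih =>
    have hleft : ∀ j ∈ Icc 1 k, ((min j (k + 1) : ℕ) : ℝ) = j := fun j hj => by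
      rw [min_eq_left (Nat.le_succ_of_le (mem_Icc.mp hj).2)]
    have hright : ∀ j' ∈ Icc 1 k, ((min (k + 1) j' : ℕ) : ℝ) = j' := fun j' hj' => by
      rw [min_eq_right (Nat.le_succ_of_le (mem_Icc.mp hj').2)]
    simp_rw [sum_Icc_succ_top (show 1 ≤ k + 1 by omega)]
    rw [sum_add_distrib, sum_congr rfl hleft, sum_congr rfl hright, ih, sum_Icc_one_natCast,
      min_self]
    push_cast; ring

theorem Finset.card_Icc_add_inter_Icc_add (m j j' : ℕ) :
    #(Icc (m + 1) (m + j) ∩ Icc (m + 1) (m + j')) = min j j' := by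
  have hinter : Icc (m + 1) (m + j) ∩ Icc (m + 1) (m + j') = Icc (m + 1) (m + min j j') := by
    ext; simp only [mem_inter, mem_Icc]; omega
  rw [hinter, Nat.card_Icc]
  omega

theorem sum_norm_sub_mean_sq {ι E : Type*} [NormedAddCommGroup E] [InnerProductSpace ℝ E]
    (J : Finset ι) (f : ι → E) :
    ∑ j ∈ J, ‖f j - (#J : ℝ)⁻¹ • ∑ j' ∈ J, f j'‖ ^ 2
      = ∑ j ∈ J, ⟪f j, f j⟫_ℝ - (#J : ℝ)⁻¹ * ∑ j ∈ J, ∑ j' ∈ J, ⟪f j, f j'⟫_ℝ := by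
  rcases J.eq_empty_or_nonempty with rfl | hJ
  · simp
  have hcard : (#J : ℝ) ≠ 0 := by simp [hJ.ne_empty]
  set F := ∑ j' ∈ J, f j'
  have hF : ⟪F, F⟫_ℝ = ∑ j ∈ J, ∑ j' ∈ J, ⟪f j, f j'⟫_ℝ := by
    simp only [F, sum_inner, inner_sum]
    exact sum_comm
  have hterm : ∀ j, ‖f j - (#J : ℝ)⁻¹ • F‖ ^ 2
      = ⟪f j, f j⟫_ℝ - 2 * (#J : ℝ)⁻¹ * ⟪f j, F⟫_ℝ + (#J : ℝ)⁻¹ ^ 2 * ⟪F, F⟫_ℝ := fun j => by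
    rw [norm_sub_sq_real, real_inner_smul_right, norm_smul, mul_pow, Real.norm_eq_abs, sq_abs,
      real_inner_self_eq_norm_sq, real_inner_self_eq_norm_sq]
    ring
  simp_rw [hterm]
  rw [sum_add_distrib, sum_sub_distrib, ← mul_sum, ← sum_inner, sum_const, nsmul_eq_mul, ← hF]
  field_simp
  ring

section UniformCorrelation

variable {Ω E : Type*} [MeasurableSpace Ω] {μ : Measure Ω}
  [NormedAddCommGroup E] [InnerProductSpace ℝ E] {e : ℕ → Ω → E} {S : Finset ℕ} {c : ℝ}

theorem integrable_inner_sum_sum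
    (hint : ∀ i ∈ S, ∀ i' ∈ S, Integrable (fun ω => ⟪e i ω, e i' ω⟫_ℝ) μ)
    {s t : Finset ℕ} (hs : s ⊆ S) (ht : t ⊆ S) :
    Integrable (fun ω => ⟪∑ i ∈ s, e i ω, ∑ i' ∈ t, e i' ω⟫_ℝ) μ := by
  simp_rw [sum_inner, inner_sum]
  exact integrable_finsetSum _ fun i hi => integrable_finsetSum _ fun i' hi' =>
    hint i (hs hi) i' (ht hi')

variable [IsProbabilityMeasure μ]

theorem integral_inner_eq_ite (hunit : ∀ i ∈ S, ∀ ω, ‖e i ω‖ = 1)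
    (hcorr : ∀ i ∈ S, ∀ i' ∈ S, i ≠ i' → ∫ ω, ⟪e i ω, e i' ω⟫_ℝ ∂μ = c)
    {i i' : ℕ} (hi : i ∈ S) (hi' : i' ∈ S) :
    ∫ ω, ⟪e i ω, e i' ω⟫_ℝ ∂μ = if i = i' then 1 else c := by
  split_ifs with h
  · subst h
    simp [hunit i hi]
  · exact hcorr i hi i' hi' h

theorem integral_inner_sum_sum (hunit : ∀ i ∈ S, ∀ ω, ‖e i ω‖ = 1)
    (hint : ∀ i ∈ S, ∀ i' ∈ S, Integrable (fun ω => ⟪e i ω, e i' ω⟫_ℝ) μ)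
    (hcorr : ∀ i ∈ S, ∀ i' ∈ S, i ≠ i' → ∫ ω, ⟪e i ω, e i' ω⟫_ℝ ∂μ = c)
    {s t : Finset ℕ} (hs : s ⊆ S) (ht : t ⊆ S) :
    ∫ ω, ⟪∑ i ∈ s, e i ω, ∑ i' ∈ t, e i' ω⟫_ℝ ∂μ = c * #s * #t + (1 - c) * #(s ∩ t) := by
  simp_rw [sum_inner, inner_sum]
  rw [integral_finsetSum _ fun i hi => integrable_finsetSum _ fun i' hi' =>
    hint i (hs hi) i' (ht hi')]
  rw [← sum_sum_ite_eq_card_inter]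
  refine sum_congr rfl fun i hi => ?_
  rw [integral_finsetSum _ fun i' hi' => hint i (hs hi) i' (ht hi')]
  exact sum_congr rfl fun i' hi' => integral_inner_eq_ite hunit hcorr (hs hi) (ht hi')

theorem integral_sum_norm_sub_mean_sq {ι : Type*} (hunit : ∀ i ∈ S, ∀ ω, ‖e i ω‖ = 1)
    (hint : ∀ i ∈ S, ∀ i' ∈ S, Integrable (fun ω => ⟪e i ω, e i' ω⟫_ℝ) μ)
    (hcorr : ∀ i ∈ S, ∀ i' ∈ S, i ≠ i' → ∫ ω, ⟪e i ω, e i' ω⟫_ℝ ∂μ = c)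
    (J : Finset ι) {I : ι → Finset ℕ} (hI : ∀ j ∈ J, I j ⊆ S) :
    ∫ ω, ∑ j ∈ J, ‖∑ i ∈ I j, e i ω - (#J : ℝ)⁻¹ • ∑ j' ∈ J, ∑ i ∈ I j', e i ω‖ ^ 2 ∂μ
      = c * (∑ j ∈ J, (#(I j) : ℝ) ^ 2 - (#J : ℝ)⁻¹ * (∑ j ∈ J, (#(I j) : ℝ)) ^ 2)
        + (1 - c) * (∑ j ∈ J, (#(I j) : ℝ)
          - (#J : ℝ)⁻¹ * ∑ j ∈ J, ∑ j' ∈ J, (#(I j ∩ I j') : ℝ)) := by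
  have hG := fun j (hj : j ∈ J) j' (hj' : j' ∈ J) =>
    integrable_inner_sum_sum hint (hI j hj) (hI j' hj')
  have hEG := fun j (hj : j ∈ J) j' (hj' : j' ∈ J) =>
    integral_inner_sum_sum hunit hint hcorr (hI j hj) (hI j' hj')
  simp_rw [sum_norm_sub_mean_sq]
  rw [integral_sub (integrable_finsetSum _ fun j hj => hG j hj j hj)
      ((integrable_finsetSum _ fun j hj => integrable_finsetSum _ fun j' hj' =>
        hG j hj j' hj').const_mul _),
    integral_const_mul, integral_finsetSum _ fun j hj => hG j hj j hj,
    integral_finsetSum _ fun j hj => integrable_finsetSum _ fun j' hj' => hG j hj j' hj',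
    sum_congr rfl fun j hj => integral_finsetSum _ fun j' hj' => hG j hj j' hj',
    sum_congr rfl fun j hj => hEG j hj j hj,
    sum_congr rfl fun j hj => sum_congr rfl fun j' hj' => hEG j hj j' hj']
  simp only [inter_self, sq, mul_assoc, sum_add_distrib, ← mul_sum, ← sum_mul]
  ring

end UniformCorrelation

/-- The expected squared radius of gyration of a translated subsegment of `k` consecutive
edges (edges `m+1, …, m+k`) inside a random ideal ring of length `n` is
`(k²-1)(2n-k) / (12k(n-1))`. -/
theorem expected_subsegment_gyration (n k m : ℕ) (hn : 2 ≤ n) (hk : 1 ≤ k)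
    (hmk : m + k ≤ n)
    {Ω : Type*} [MeasurableSpace Ω] (μ : Measure Ω) [IsProbabilityMeasure μ]
    (e : ℕ → Ω → EuclideanSpace ℝ (Fin 3))
    (hunit : ∀ i ∈ Finset.Icc 1 n, ∀ ω, ‖e i ω‖ = 1)
    (hint : ∀ i ∈ Finset.Icc 1 n, ∀ i' ∈ Finset.Icc 1 n,
      Integrable (fun ω => ⟪e i ω, e i' ω⟫_ℝ) μ)
    (hexp : ∀ i ∈ Finset.Icc 1 n, ∀ i' ∈ Finset.Icc 1 n, i ≠ i' →
      ∫ ω, ⟪e i ω, e i' ω⟫_ℝ ∂μ = -1 / ((n : ℝ) - 1)) :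
    ∫ ω, (1 / (k : ℝ)) * ∑ j ∈ Finset.Icc 1 k,
        ‖(∑ i ∈ Finset.Icc (m + 1) (m + j), e i ω)
          - (k : ℝ)⁻¹ • ∑ j' ∈ Finset.Icc 1 k, ∑ i ∈ Finset.Icc (m + 1) (m + j'), e i ω‖ ^ 2 ∂μ
      = ((k : ℝ) ^ 2 - 1) * (2 * (n : ℝ) - (k : ℝ)) / (12 * (k : ℝ) * ((n : ℝ) - 1)) := by
  have hsub : ∀ j ∈ Icc 1 k, Icc (m + 1) (m + j) ⊆ Icc 1 n := fun j hj i hi => by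
    simp only [mem_Icc] at hj hi ⊢; omega
  have hgyr := integral_sum_norm_sub_mean_sq hunit hint hexp (Icc 1 k) hsub
  simp only [Nat.card_Icc, Nat.add_sub_add_right, Nat.add_sub_cancel_left, add_tsub_cancel_right,
    card_Icc_add_inter_Icc_add] at hgyr
  rw [integral_const_mul, hgyr, sum_Icc_one_natCast, sum_Icc_one_natCast_sq,
    sum_Icc_one_sum_Icc_one_min]
  have hn1 : (n : ℝ) - 1 ≠ 0 := by
    have : (2 : ℝ) ≤ n := by exact_mod_cast hn
    linarith
  have hk0 : (k : ℝ) ≠ 0 := Nat.cast_ne_zero.mpr (by omega)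
  field_simp
  ring
end
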